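/- Let n ≥ 1, let A be an IFM of order n and let λ ∈ [0,1). Then the powers of A under the ∗ operation converge: for all i, j, the real sequences m ↦ (A^m)μ i j and m ↦ (A^m)ν i j each converge to a limit. -/

import Mathlib

open Filter Topology

/-- Membership scalar operation of the convex combination of max-min and
maxarithmetic mean–minarithmetic mean: `x ⊛ y = λ·min(x,y) + (1-λ)·(x+y)/2`. -/
noncomputable def starMu (lam x y : ℝ) : ℝ :=
  lam * min x y + (1 - lam) * ((x + y) / 2)

/-- Non-membership scalar operation:
`x ⊛' y = λ·max(x,y) + (1-λ)·(x+y)/2`. -/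
noncomputable def starNu (lam x y : ℝ) : ℝ :=
  lam * max x y + (1 - lam) * ((x + y) / 2)

/-- `A` (given by membership part `Amu` and non-membership part `Anu`) is an
intuitionistic fuzzy matrix. -/
def IsIFM (n : ℕ) (Amu Anu : Fin n → Fin n → ℝ) : Prop :=
  ∀ i j, 0 ≤ Amu i j ∧ 0 ≤ Anu i j ∧ Amu i j + Anu i j ≤ 1

/-- Powers of an IFM under the convex combination `∗` of the max-min and the
maxarithmetic mean–minarithmetic mean operations: `A^1 = A`,
`A^(k+1) = A^k ∗ A` with
`(X ∗ A)μ i j = max_t (Xμ i t ⊛ Aμ t j)` and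
`(X ∗ A)ν i j = min_t (Xν i t ⊛' Aν t j)`.
(The value at `0` is irrelevant; it is set to `A`.) -/
noncomputable def sPow (n : ℕ) (lam : ℝ) (Amu Anu : Fin n → Fin n → ℝ) :
    ℕ → (Fin n → Fin n → ℝ) × (Fin n → Fin n → ℝ)
  | 0 => (Amu, Anu)
  | 1 => (Amu, Anu)
  | m + 2 =>
    let X := sPow n lam Amu Anu (m + 1)
    (fun i j => ⨆ t : Fin n, starMu lam (X.1 i t) (Amu t j),
     fun i j => ⨅ t : Fin n, starNu lam (X.2 i t) (Anu t j))

/-!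
For `0 ≤ λ < 1` one step `X ↦ X ∗ A` of each component is a contraction of the sup metric
with constant `(1 + λ) / 2`: `min` and `max` are `1`-Lipschitz, the arithmetic mean only
sees half of a change in `X`, and taking a `max` or `min` over `t` preserves Lipschitz
constants. The powers `A^(m+1)` are the Banach iterates of these contractions starting
at `A`, so they converge.
-/

open NNReal

namespace LipschitzWith

variable {α ι : Type*} [PseudoMetricSpace α] {K : ℝ≥0}

protected theorem pi {β : Type*} [PseudoEMetricSpace β] [Fintype ι] {f : α → ι → β}
    (hf : ∀ i, LipschitzWith K fun x => f x i) : LipschitzWith K f :=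
  fun x y => edist_pi_le_iff.2 fun i => hf i x y

variable [Finite ι] [Nonempty ι] {f : ι → α → ℝ}

protected theorem ciSup (hf : ∀ t, LipschitzWith K (f t)) :
    LipschitzWith K fun x => ⨆ t, f t x :=
  LipschitzWith.of_le_add_mul K fun x y => ciSup_le fun t =>
    ((hf t).le_add_mul x y).trans <|
      add_le_add_left (le_ciSup (Set.finite_range fun t => f t y).bddAbove t) _

protected theorem ciInf (hf : ∀ t, LipschitzWith K (f t)) :
    LipschitzWith K fun x => ⨅ t, f t x := by
  refine LipschitzWith.of_le_add_mul K fun x y => ?_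
  have : (⨅ t, f t x) - K * dist x y ≤ ⨅ t, f t y := le_ciInf fun t => by
    linarith [ciInf_le (Set.finite_range fun t => f t x).bddBelow t, (hf t).le_add_mul x y]
  linarith

end LipschitzWith

section Scalar

variable {lam : ℝ}

theorem abs_mul_add_half_mul_le (h0 : 0 ≤ lam) (h1 : lam ≤ 1) {d e : ℝ} (hde : |d| ≤ |e|) :
    |lam * d + (1 - lam) / 2 * e| ≤ (1 + lam) / 2 * |e| := by
  have hd : lam * |d| ≤ lam * |e| := mul_le_mul_of_nonneg_left hde h0
  have hc : 0 ≤ (1 - lam) / 2 := by linarith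
  calc |lam * d + (1 - lam) / 2 * e|
      ≤ |lam * d| + |(1 - lam) / 2 * e| := abs_add_le _ _
    _ = lam * |d| + (1 - lam) / 2 * |e| := by
        rw [abs_mul, abs_mul, abs_of_nonneg h0, abs_of_nonneg hc]
    _ ≤ (1 + lam) / 2 * |e| := by linarith

theorem lipschitzWith_starMu (h0 : 0 ≤ lam) (h1 : lam ≤ 1) (a : ℝ) :
    LipschitzWith (Real.toNNReal ((1 + lam) / 2)) (starMu lam · a) := by
  refine LipschitzWith.of_dist_le_mul fun x y => ?_
  rw [Real.coe_toNNReal _ (by linarith), Real.dist_eq, Real.dist_eq]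
  have hmin : |min x a - min y a| ≤ |x - y| := by
    simpa using abs_min_sub_min_le_max x a y a
  convert abs_mul_add_half_mul_le h0 h1 hmin using 2
  unfold starMu
  ring

theorem lipschitzWith_starNu (h0 : 0 ≤ lam) (h1 : lam ≤ 1) (a : ℝ) :
    LipschitzWith (Real.toNNReal ((1 + lam) / 2)) (starNu lam · a) := by
  refine LipschitzWith.of_dist_le_mul fun x y => ?_
  rw [Real.coe_toNNReal _ (by linarith), Real.dist_eq, Real.dist_eq]
  convert abs_mul_add_half_mul_le h0 h1 (abs_max_sub_max_le_abs x y a) using 2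
  unfold starNu
  ring

end Scalar

section Step

variable {ι : Type*} (lam : ℝ)

noncomputable def muStep (A X : ι → ι → ℝ) : ι → ι → ℝ :=
  fun i j => ⨆ t, starMu lam (X i t) (A t j)

noncomputable def nuStep (A X : ι → ι → ℝ) : ι → ι → ℝ :=
  fun i j => ⨅ t, starNu lam (X i t) (A t j)

theorem sPow_succ (n : ℕ) (Amu Anu : Fin n → Fin n → ℝ) (m : ℕ) :
    sPow n lam Amu Anu (m + 1) = ((muStep lam Amu)^[m] Amu, (nuStep lam Anu)^[m] Anu) := by
  induction m with
  | zero => rfl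
  | succ m ih =>
    rw [Function.iterate_succ_apply', Function.iterate_succ_apply']
    simp only [Prod.ext_iff] at ih
    rw [← ih.1, ← ih.2]
    rfl

variable [Fintype ι]

theorem lipschitzWith_apply_apply (i t : ι) :
    LipschitzWith 1 fun X : ι → ι → ℝ => X i t := by
  rw [← one_mul (1 : ℝ≥0)]
  exact (LipschitzWith.eval t).comp (LipschitzWith.eval i)

variable [Nonempty ι] {lam}

theorem lipschitzWith_muStep (h0 : 0 ≤ lam) (h1 : lam ≤ 1) (A : ι → ι → ℝ) :
    LipschitzWith (Real.toNNReal ((1 + lam) / 2)) (muStep lam A) :=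
  LipschitzWith.pi fun i => LipschitzWith.pi fun j => LipschitzWith.ciSup fun t => by
    rw [← mul_one (Real.toNNReal _)]
    exact (lipschitzWith_starMu h0 h1 (A t j)).comp (lipschitzWith_apply_apply i t)

theorem lipschitzWith_nuStep (h0 : 0 ≤ lam) (h1 : lam ≤ 1) (A : ι → ι → ℝ) :
    LipschitzWith (Real.toNNReal ((1 + lam) / 2)) (nuStep lam A) :=
  LipschitzWith.pi fun i => LipschitzWith.pi fun j => LipschitzWith.ciInf fun t => by
    rw [← mul_one (Real.toNNReal _)]
    exact (lipschitzWith_starNu h0 h1 (A t j)).comp (lipschitzWith_apply_apply i t)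

end Step

theorem sPow_converges_general (n : ℕ)
    (Amu Anu : Fin n → Fin n → ℝ)
    (lam : ℝ) (hlam : lam ∈ Set.Ico (0 : ℝ) 1) (i j : Fin n) :
    (∃ L : ℝ, Tendsto (fun m => (sPow n lam Amu Anu m).1 i j) atTop (𝓝 L)) ∧
      ∃ M : ℝ, Tendsto (fun m => (sPow n lam Amu Anu m).2 i j) atTop (𝓝 M) := by
  have : Nonempty (Fin n) := ⟨i⟩
  obtain ⟨h0, h1⟩ := hlam
  have hK : Real.toNNReal ((1 + lam) / 2) < 1 := Real.toNNReal_lt_one.2 (by linarith)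
  have hμ := ContractingWith.tendsto_iterate_fixedPoint
    ⟨hK, lipschitzWith_muStep h0 h1.le Amu⟩ Amu
  have hν := ContractingWith.tendsto_iterate_fixedPoint
    ⟨hK, lipschitzWith_nuStep h0 h1.le Anu⟩ Anu
  exact ⟨⟨_, (tendsto_add_atTop_iff_nat 1).1 <| by
      simpa only [sPow_succ] using (hμ.apply_nhds i).apply_nhds j⟩,
    _, (tendsto_add_atTop_iff_nat 1).1 <| by
      simpa only [sPow_succ] using (hν.apply_nhds i).apply_nhds j⟩

/-- Theorem 4.5 (first part): the powers of an IFM under the `∗` operation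
converge entrywise. -/
theorem sPow_converges (n : ℕ) (hn : 1 ≤ n)
    (Amu Anu : Fin n → Fin n → ℝ) (hA : IsIFM n Amu Anu)
    (lam : ℝ) (hlam : lam ∈ Set.Ico (0 : ℝ) 1) (i j : Fin n) :
    (∃ L : ℝ, Tendsto (fun m => (sPow n lam Amu Anu m).1 i j) atTop (𝓝 L)) ∧
      ∃ M : ℝ, Tendsto (fun m => (sPow n lam Amu Anu m).2 i j) atTop (𝓝 M) :=
  sPow_converges_general n Amu Anu lam hlam i j
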